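/- (Key step of Theorem 1.) Let N ≥ 1 and for each j ∈ {1,…,N} let {E^{(j)}_{i_j}} be Kraus operators of a channel on ℂ^d with at least two linearly independent Kraus operators E^{(j)}_{p_j}, E^{(j)}_{q_j} (the 'noisy' condition), and let α^{(j)}_{i_j} ∈ ℂ be amplitudes with α^{(j)}_{p_j} ≠ 0. Let φ₁,…,φ_N ∈ ℂ be all nonzero. Define E_{i₁…i_N} = Σ_{j=1}^N φ_j α^{(1)}_{i₁}⋯α^{(j−1)}_{i_{j−1}} E^{(j)}_{i_j} α^{(j+1)}_{i_{j+1}}⋯α^{(N)}_{i_N} ⊗ |j⟩, a map ℂ^d → ℂ^d ⊗ ℂ^N. Then the N+1 operators E₀ = E_{p₁…p_N} and E_k = E_{p₁…p_{k−1} q_k p_{k+1}…p_N} (k = 1,…,N) are linearly independent. -/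

import Mathlib

/-!
Projecting onto the `j`-th output block, `(1 ⊗ ⟨j|) E_{i₁…i_N}` is a multiple of `E^{(j)}_{i_j}`.
Hence the `j`-th block of every operator of the family is a multiple of `E^{(j)}_{p_j}`, except
that of `E_j`, which is a nonzero multiple of `E^{(j)}_{q_j}`. Applying `1 ⊗ ⟨j|` to a vanishing
linear combination and using the independence of `E^{(j)}_{p_j}, E^{(j)}_{q_j}` kills the
coefficient of `E_j` for every `j`; what remains, in any block, is the coefficient of `E₀` times a
nonzero multiple of `E^{(j)}_{p_j}`.
-/

open Matrix

/-- The Kraus operators of the superposition of N independent channels on ℂ^d: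
E_{i₁…i_N} = Σ_j φ_j (∏_{k≠j} α^{(k)}_{i_k}) E^{(j)}_{i_j} ⊗ |j⟩, as a matrix from ℂ^d
to ℂ^d ⊗ ℂ^N, for a choice f of one Kraus index per channel. -/
noncomputable def Esup {d N : ℕ} {ι : Type} (φ : Fin N → ℂ) (α : Fin N → ι → ℂ)
    (E : Fin N → ι → Matrix (Fin d) (Fin d) ℂ) (f : Fin N → ι) :
    Matrix (Fin d × Fin N) (Fin d) ℂ :=
  Matrix.of fun p b =>
    φ p.2 * (∏ k ∈ Finset.univ.erase p.2, α k (f k)) * E p.2 (f p.2) p.1 b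

open Finset

theorem linearIndependent_option_of_pair_components {K M M' n : Type*} [Field K]
    [AddCommGroup M] [Module K M] [AddCommGroup M'] [Module K M'] [Fintype n] [Nonempty n]
    (π : n → M →ₗ[K] M') (x y : n → M') (hxy : ∀ j, LinearIndependent K ![x j, y j])
    (v : Option n → M) (a c : n → K) (b : n → n → K) (ha : ∀ j, a j ≠ 0) (hc : ∀ j, c j ≠ 0)
    (hnone : ∀ j, π j (v none) = a j • x j)
    (hoff : ∀ j k, k ≠ j → π j (v (some k)) = b j k • x j)
    (hdiag : ∀ j, π j (v (some j)) = c j • y j) :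
    LinearIndependent K v := by
  classical
  rw [Fintype.linearIndependent_iff]
  intro g hg
  have hcomp : ∀ j, (g none * a j + ∑ k ∈ univ.erase j, g (some k) * b j k) • x j
      + (g (some j) * c j) • y j = 0 := by
    intro j
    have h := congrArg (π j) hg
    rw [map_sum, Fintype.sum_option, ← add_sum_erase _ _ (mem_univ j)] at h
    simp only [map_smul, hnone, hdiag, map_zero] at h
    rw [sum_congr rfl fun k hk => by rw [hoff j k (ne_of_mem_erase hk)]] at h
    simp only [add_smul, sum_smul, mul_smul]
    rw [← h]
    abel
  have hsome : ∀ j, g (some j) = 0 := fun j =>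
    (mul_eq_zero.mp (LinearIndependent.pair_iff.mp (hxy j) _ _ (hcomp j)).2).resolve_right (hc j)
  obtain ⟨j₀⟩ := ‹Nonempty n›
  have hnone₀ := (LinearIndependent.pair_iff.mp (hxy j₀) _ _ (hcomp j₀)).1
  simp only [hsome, zero_mul, sum_const_zero, add_zero] at hnone₀
  rintro (_ | j)
  · exact (mul_eq_zero.mp hnone₀).resolve_right (ha j₀)
  · exact hsome j

/-- `M ↦ (1 ⊗ ⟨j|) M`, for `M` with rows indexed by `m × n`. -/
@[simps]
def Matrix.blockRowLinearMap {m n o R : Type*} [Semiring R] (j : n) :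
    Matrix (m × n) o R →ₗ[R] Matrix m o R where
  toFun M := M.submatrix (·, j) id
  map_add' _ _ := rfl
  map_smul' _ _ := rfl

theorem blockRowLinearMap_Esup {d N : ℕ} {ι : Type} (φ : Fin N → ℂ) (α : Fin N → ι → ℂ)
    (E : Fin N → ι → Matrix (Fin d) (Fin d) ℂ) (f : Fin N → ι) (j : Fin N) :
    blockRowLinearMap j (Esup φ α E f) = (φ j * ∏ k ∈ univ.erase j, α k (f k)) • E j (f j) := by
  ext a b
  simp [Esup, mul_assoc]

theorem prod_erase_apply_update_self {n ι β : Type*} [Fintype n] [DecidableEq n] [CommMonoid β]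
    (α : n → ι → β) (f : n → ι) (j : n) (i : ι) :
    ∏ k ∈ univ.erase j, α k (Function.update f j i k) = ∏ k ∈ univ.erase j, α k (f k) :=
  prod_congr rfl fun _ hk => by rw [Function.update_of_ne (ne_of_mem_erase hk)]

theorem stmt13 {d N : ℕ} (hN : 1 ≤ N) {ι : Type}
    (E : Fin N → ι → Matrix (Fin d) (Fin d) ℂ)
    (α : Fin N → ι → ℂ)
    (pidx qidx : Fin N → ι)
    (hnoisy : ∀ j, LinearIndependent ℂ ![E j (pidx j), E j (qidx j)])
    (hαp : ∀ j, α j (pidx j) ≠ 0)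
    (φ : Fin N → ℂ) (hφ : ∀ j, φ j ≠ 0) :
    LinearIndependent ℂ (fun o : Option (Fin N) =>
      match o with
      | none => Esup φ α E pidx
      | some k => Esup φ α E (Function.update pidx k (qidx k))) := by
  have : Nonempty (Fin N) := ⟨⟨0, hN⟩⟩
  set P : Fin N → ℂ := fun j => φ j * ∏ k ∈ univ.erase j, α k (pidx k)
  have hP : ∀ j, P j ≠ 0 := fun j => mul_ne_zero (hφ j) (prod_ne_zero_iff.2 fun k _ => hαp k)
  refine linearIndependent_option_of_pair_components blockRowLinearMap
    (fun j => E j (pidx j)) (fun j => E j (qidx j)) hnoisy _ P P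
    (fun j k => φ j * ∏ l ∈ univ.erase j, α l (Function.update pidx k (qidx k) l)) hP hP
    (fun j => blockRowLinearMap_Esup ..) (fun j k hkj => ?_) (fun j => ?_)
  · simp only [blockRowLinearMap_Esup, Function.update_of_ne hkj.symm]
  · simp only [blockRowLinearMap_Esup, Function.update_self, prod_erase_apply_update_self, P]
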